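/- Let f : X → X be continuous on a compact metric space with μ ↦ h_μ(f) upper semi-continuous, Φ ∈ C(X, ℝ^m), w₀ ∈ int Rot(Φ), α ≥ 1, and let (Φ_{ε_n})_n be an approximating sequence of Φ (‖Φ − Φ_{ε_n}‖_∞ < ε_n, ε_n → 0). Then lim_{n→∞} h^l_{Φ_{ε_n}}(w₀, α·ε_n) = H_Φ(w₀) = lim_{n→∞} h^u_{Φ_{ε_n}}(w₀, α·ε_n). -/

import Mathlib

open MeasureTheory

variable {X : Type*} [MetricSpace X] [CompactSpace X] [MeasurableSpace X] [BorelSpace X]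

/-- `μ` is an `f`-invariant Borel probability measure. -/
def InvariantProb (f : X → X) (μ : ProbabilityMeasure X) : Prop :=
  (μ : Measure X).map f = (μ : Measure X)

/-- The generalized rotation set of a potential `Φ : X → ℝ^m` with respect to `f`. -/
def Rot (f : X → X) {m : ℕ} (Φ : X → EuclideanSpace ℝ (Fin m)) :
    Set (EuclideanSpace ℝ (Fin m)) :=
  {w | ∃ μ : ProbabilityMeasure X, InvariantProb f μ ∧ (∫ x, Φ x ∂(μ : Measure X)) = w}

/-- The localized entropy `H(w) = sup { h_μ(f) : μ invariant, rv(μ) = w }`, where the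
measure-theoretic entropy is given by the function `h`. -/
noncomputable def locEnt (f : X → X) (h : ProbabilityMeasure X → ℝ) {m : ℕ}
    (Φ : X → EuclideanSpace ℝ (Fin m)) (w : EuclideanSpace ℝ (Fin m)) : ℝ :=
  sSup (h '' {μ | InvariantProb f μ ∧ (∫ x, Φ x ∂(μ : Measure X)) = w})

/-- The maximum local entropy of `Ψ` on the closed ball `B̄(w₀, r)`. -/
noncomputable def hu (f : X → X) (h : ProbabilityMeasure X → ℝ) {m : ℕ}
    (Ψ : X → EuclideanSpace ℝ (Fin m)) (w₀ : EuclideanSpace ℝ (Fin m)) (r : ℝ) : ℝ :=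
  sSup (locEnt f h Ψ '' (Metric.closedBall w₀ r ∩ Rot f Ψ))

/-- The minimum local entropy of `Ψ` on the closed ball `B̄(w₀, r)`. -/
noncomputable def hl (f : X → X) (h : ProbabilityMeasure X → ℝ) {m : ℕ}
    (Ψ : X → EuclideanSpace ℝ (Fin m)) (w₀ : EuclideanSpace ℝ (Fin m)) (r : ℝ) : ℝ :=
  sInf (locEnt f h Ψ '' (Metric.closedBall w₀ r ∩ Rot f Ψ))

/-!
Since the entropy is affine, `H_Ψ` is concave on `Rot(Ψ)` for every potential `Ψ`; in particular
`H_Φ` is continuous at the interior point `w₀`. This gives the upper bound: a measure whose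
`Φ_ε`-rotation vector lies in `B̄(w₀, αε)` has its `Φ`-rotation vector in `B̄(w₀, (α + 1)ε)`.

For the lower bound, choose invariant measures whose `Φ`-rotation vectors form a finite net of a
ball `B̄(w₀, r) ⊆ Rot(Φ)`, and let `L` be the least of their entropies. Their `Φ_ε`-rotation
vectors move by at most `ε`, so a separation argument shows that their convex hull still contains
`B̄(w₀, r/2 - ε)`, where `H_{Φ_ε} ≥ L` by concavity. Given `w` near `w₀`, extend the segment from
the `Φ_ε`-rotation vector of a measure that nearly realises `H_Φ(w₀)` through `w` into that ball;
concavity of `H_{Φ_ε}` along it gives `H_{Φ_ε}(w) ≥ H_Φ(w₀) - o(1)`.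
-/

open Metric Filter Topology
open scoped RealInnerProductSpace

theorem closedBall_sub_subset_of_forall_exists_dist_le {E : Type*} [NormedAddCommGroup E]
    [InnerProductSpace ℝ E] [CompleteSpace E] {C : Set E} (hCc : IsClosed C) (hCv : Convex ℝ C)
    {c : E} {R η : ℝ} (hη : 0 ≤ η) (hcov : ∀ y ∈ closedBall c R, ∃ p ∈ C, dist p y ≤ η) :
    closedBall c (R - η) ⊆ C := by
  intro x hx
  by_contra hxC
  -- separate `x` from `C` by a hyperplane with normal `a`, then test `hcov` at the point `y` of
  -- the big ball furthest in direction `a` (when `a = 0`, the junk value `R / 0 = 0` gives `y = c`)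
  obtain ⟨g, u, hgC, hgx⟩ := geometric_hahn_banach_closed_point hCv hCc hxC
  set a := (InnerProductSpace.toDual ℝ E).symm g
  have hg : ∀ y, g y = ⟪a, y⟫ := fun y => InnerProductSpace.toDual_symm_apply.symm
  have hR : 0 ≤ R := by linarith [dist_nonneg.trans (mem_closedBall.1 hx)]
  set y := c + (R / ‖a‖) • a
  have hy : y ∈ closedBall c R := by
    rcases eq_or_ne ‖a‖ 0 with ha | ha
    · simpa [y, ha] using hR
    · simp [y, dist_eq_norm, norm_smul, abs_of_nonneg hR, ha]
  obtain ⟨p, hpC, hpy⟩ := hcov y hy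
  have hay : ⟪a, y⟫ = ⟪a, c⟫ + R * ‖a‖ := by
    rcases eq_or_ne ‖a‖ 0 with ha | ha
    · simp [y, norm_eq_zero.1 ha]
    · rw [inner_add_right, real_inner_smul_right, real_inner_self_eq_norm_sq]
      field_simp
  have hxa : ⟪a, x - c⟫ ≤ ‖a‖ * (R - η) :=
    (real_inner_le_norm _ _).trans
      (mul_le_mul_of_nonneg_left (by rw [← dist_eq_norm]; exact mem_closedBall.1 hx)
        (norm_nonneg a))
  have hpa : ⟪a, y - p⟫ ≤ ‖a‖ * η :=
    (real_inner_le_norm _ _).trans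
      (mul_le_mul_of_nonneg_left (by rw [← dist_eq_norm, dist_comm]; exact hpy) (norm_nonneg a))
  rw [inner_sub_right] at hxa hpa
  linarith [hgC p hpC, hg p, hg x]

theorem ConcaveOn.sub_le_of_closedBall {E : Type*} [NormedAddCommGroup E] [NormedSpace ℝ E]
    {s : Set E} {g : E → ℝ} (hg : ConcaveOn ℝ s g) {v w : E} (hv : v ∈ s) {ρ L M δ : ℝ}
    (hMv : M ≤ g v) (hρ : 0 < ρ) (hball : ∀ u ∈ closedBall w ρ, u ∈ s ∧ L ≤ g u)
    (hd : dist w v * |M - L| ≤ ρ * δ) : M - δ ≤ g w := by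
  set d := dist w v
  have hd0 : 0 ≤ d := dist_nonneg
  -- `w` divides the segment from `v` to a point `u` of the ball in the ratio `d : ρ`
  set u := w + (ρ / d) • (w - v)
  have hu : u ∈ closedBall w ρ := by
    rcases hd0.eq_or_lt with hdz | hdpos
    · simp [u, ← hdz, hρ.le]
    · simp [u, norm_smul, abs_of_nonneg hρ.le, ← dist_eq_norm, d, hdpos.ne']
  obtain ⟨hus, hLu⟩ := hball u hu
  have hρd : 0 < ρ + d := by positivity
  have hconc : ρ * g v + d * g u ≤ (ρ + d) * g w := by
    have hw : (ρ / (ρ + d)) • v + (d / (ρ + d)) • u = w := by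
      rcases hd0.eq_or_lt with hdz | hdpos
      · simp [u, ← hdz, hρ.ne', dist_eq_zero.1 hdz.symm]
      · simp only [u]
        match_scalars <;> field_simp <;> ring
    have := hg.2 hv hus (div_nonneg hρ.le hρd.le) (div_nonneg hd0 hρd.le)
      (by rw [← add_div, div_self hρd.ne'])
    rw [hw, smul_eq_mul, smul_eq_mul] at this
    rwa [div_mul_eq_mul_div, div_mul_eq_mul_div, ← add_div, div_le_iff₀ hρd, mul_comm (g w)] at this
  have hML : d * (M - L) ≤ ρ * δ := (mul_le_mul_of_nonneg_left (le_abs_self _) hd0).trans hd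
  have hδ : 0 ≤ δ := nonneg_of_mul_nonneg_right ((mul_nonneg hd0 (abs_nonneg _)).trans hd) hρ
  refine le_of_mul_le_mul_left ?_ hρd
  nlinarith [mul_le_mul_of_nonneg_left hMv hρ.le, mul_le_mul_of_nonneg_left hLu hd0]

theorem tendsto_sInf_and_sSup_of_subset_Icc {ι : Type*} {l : Filter ι} {A : ι → Set ℝ} {a : ℝ}
    (hne : ∀ᶠ i in l, (A i).Nonempty) (hA : ∀ δ > 0, ∀ᶠ i in l, A i ⊆ Set.Icc (a - δ) (a + δ)) :
    Tendsto (fun i => sInf (A i)) l (𝓝 a) ∧ Tendsto (fun i => sSup (A i)) l (𝓝 a) := by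
  have hmem : ∀ δ > 0, ∀ᶠ i in l,
      sInf (A i) ∈ closedBall a δ ∧ sSup (A i) ∈ closedBall a δ := by
    intro δ hδ
    filter_upwards [hne, hA δ hδ] with i ⟨x, hx⟩ hAi
    rw [Real.closedBall_eq_Icc]
    have hlo : a - δ ∈ lowerBounds (A i) := fun y hy => (hAi hy).1
    have hup : a + δ ∈ upperBounds (A i) := fun y hy => (hAi hy).2
    exact ⟨⟨le_csInf ⟨x, hx⟩ hlo, (csInf_le ⟨_, hlo⟩ hx).trans (hAi hx).2⟩,
      ⟨(hAi hx).1.trans (le_csSup ⟨_, hup⟩ hx), csSup_le ⟨x, hx⟩ hup⟩⟩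
  constructor <;> refine Metric.tendsto_nhds.2 fun δ hδ => ?_ <;>
    filter_upwards [hmem (δ / 2) (half_pos hδ)] with i hi
  · exact (mem_closedBall.1 hi.1).trans_lt (half_lt_self hδ)
  · exact (mem_closedBall.1 hi.2).trans_lt (half_lt_self hδ)

theorem integral_ofReal_smul_add_ofReal_smul {α E : Type*} [MeasurableSpace α]
    [NormedAddCommGroup E] [NormedSpace ℝ E] {μ ν : Measure α} {Ψ : α → E}
    (hμ : Integrable Ψ μ) (hν : Integrable Ψ ν) {s t : ℝ} (hs : 0 ≤ s) (ht : 0 ≤ t) :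
    ∫ x, Ψ x ∂(ENNReal.ofReal s • μ + ENNReal.ofReal t • ν)
      = s • ∫ x, Ψ x ∂μ + t • ∫ x, Ψ x ∂ν := by
  rw [integral_add_measure (hμ.smul_measure ENNReal.ofReal_ne_top)
      (hν.smul_measure ENNReal.ofReal_ne_top), integral_smul_measure, integral_smul_measure,
    ENNReal.toReal_ofReal hs, ENNReal.toReal_ofReal ht]

theorem dist_integral_le_of_norm_sub_le {α E : Type*} [MeasurableSpace α]
    [NormedAddCommGroup E] [NormedSpace ℝ E] {μ : Measure α} [IsProbabilityMeasure μ]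
    {Φ Ψ : α → E} (hΦ : Integrable Φ μ) (hΨ : Integrable Ψ μ) {e : ℝ}
    (h : ∀ x, ‖Φ x - Ψ x‖ ≤ e) : dist (∫ x, Φ x ∂μ) (∫ x, Ψ x ∂μ) ≤ e := by
  rw [dist_eq_norm, ← integral_sub hΦ hΨ]
  simpa using norm_integral_le_of_norm_le_const (μ := μ) (Eventually.of_forall h)

section LocalizedEntropy

variable {Ω : Type*} [MeasurableSpace Ω] {f : Ω → Ω} {h : ProbabilityMeasure Ω → ℝ} {m : ℕ}

def AffineOnMixtures (h : ProbabilityMeasure Ω → ℝ) : Prop :=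
  ∀ (μ ν ρ : ProbabilityMeasure Ω) (t : ℝ), 0 ≤ t → t ≤ 1 →
    (ρ : Measure Ω) = ENNReal.ofReal t • (μ : Measure Ω)
        + ENNReal.ofReal (1 - t) • (ν : Measure Ω) →
    h ρ = t * h μ + (1 - t) * h ν

theorem exists_invariantProb_mixture (hf : Measurable f) (haff : AffineOnMixtures h)
    {E : Type*} [NormedAddCommGroup E] [NormedSpace ℝ E] {Ψ : Ω → E}
    (hΨ : ∀ μ : ProbabilityMeasure Ω, Integrable Ψ μ)
    {μ ν : ProbabilityMeasure Ω} (hμ : InvariantProb f μ) (hν : InvariantProb f ν)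
    {a b : ℝ} (ha : 0 ≤ a) (hb : 0 ≤ b) (hab : a + b = 1) :
    ∃ ρ : ProbabilityMeasure Ω, InvariantProb f ρ ∧
      ∫ x, Ψ x ∂(ρ : Measure Ω) = a • ∫ x, Ψ x ∂(μ : Measure Ω) + b • ∫ x, Ψ x ∂(ν : Measure Ω) ∧
      h ρ = a * h μ + b * h ν := by
  obtain rfl : b = 1 - a := by linarith
  let ρ : ProbabilityMeasure Ω :=
    ⟨ENNReal.ofReal a • (μ : Measure Ω) + ENNReal.ofReal (1 - a) • (ν : Measure Ω),
      ⟨by simp [← ENNReal.ofReal_add ha hb]⟩⟩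
  refine ⟨ρ, ?_, integral_ofReal_smul_add_ofReal_smul (hΨ μ) (hΨ ν) ha hb,
    haff μ ν ρ a ha (by linarith) rfl⟩
  change Measure.map f (_ + _) = _
  rw [Measure.map_add _ _ hf, Measure.map_smul, Measure.map_smul, hμ, hν]
  rfl

theorem le_locEnt (hbdd : BddAbove (Set.range h)) (Ψ : Ω → EuclideanSpace ℝ (Fin m))
    {μ : ProbabilityMeasure Ω} (hμ : InvariantProb f μ) :
    h μ ≤ locEnt f h Ψ (∫ x, Ψ x ∂(μ : Measure Ω)) :=
  le_csSup (hbdd.mono (Set.image_subset_range _ _)) ⟨μ, ⟨hμ, rfl⟩, rfl⟩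

theorem locEnt_le {Ψ : Ω → EuclideanSpace ℝ (Fin m)} {w : EuclideanSpace ℝ (Fin m)}
    (hw : w ∈ Rot f Ψ) {c : ℝ}
    (hc : ∀ μ, InvariantProb f μ → ∫ x, Ψ x ∂(μ : Measure Ω) = w → h μ ≤ c) :
    locEnt f h Ψ w ≤ c := by
  obtain ⟨μ, hμ⟩ := hw
  exact csSup_le ⟨h μ, μ, hμ, rfl⟩ (by rintro _ ⟨ν, hν, rfl⟩; exact hc ν hν.1 hν.2)

theorem exists_lt_locEnt {Ψ : Ω → EuclideanSpace ℝ (Fin m)} {w : EuclideanSpace ℝ (Fin m)}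
    (hw : w ∈ Rot f Ψ) {c : ℝ} (hc : c < locEnt f h Ψ w) :
    ∃ μ, InvariantProb f μ ∧ ∫ x, Ψ x ∂(μ : Measure Ω) = w ∧ c < h μ := by
  obtain ⟨μ, hμ⟩ := hw
  obtain ⟨_, ⟨ν, hν, rfl⟩, hcν⟩ := exists_lt_of_lt_csSup (Set.Nonempty.image h ⟨μ, hμ⟩) hc
  exact ⟨ν, hν.1, hν.2, hcν⟩

theorem concaveOn_locEnt (hf : Measurable f) (hbdd : BddAbove (Set.range h))
    (haff : AffineOnMixtures h) {Ψ : Ω → EuclideanSpace ℝ (Fin m)}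
    (hΨ : ∀ μ : ProbabilityMeasure Ω, Integrable Ψ μ) :
    ConcaveOn ℝ (Rot f Ψ) (locEnt f h Ψ) := by
  refine ⟨?_, fun u hu z hz a b ha hb hab => le_of_forall_pos_le_add fun δ hδ => ?_⟩
  · rintro _ ⟨μ, hμ, rfl⟩ _ ⟨ν, hν, rfl⟩ a b ha hb hab
    obtain ⟨ρ, hρ, hρΨ, -⟩ := exists_invariantProb_mixture hf haff hΨ hμ hν ha hb hab
    exact ⟨ρ, hρ, hρΨ⟩
  obtain ⟨μ, hμ, rfl, hμδ⟩ := exists_lt_locEnt hu (sub_lt_self _ hδ)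
  obtain ⟨ν, hν, rfl, hνδ⟩ := exists_lt_locEnt hz (sub_lt_self _ hδ)
  obtain ⟨ρ, hρ, hρΨ, hρh⟩ := exists_invariantProb_mixture hf haff hΨ hμ hν ha hb hab
  have hρle := le_locEnt hbdd Ψ hρ
  rw [hρΨ] at hρle
  simp only [smul_eq_mul]
  nlinarith [mul_le_mul_of_nonneg_left hμδ.le ha, mul_le_mul_of_nonneg_left hνδ.le hb]

theorem locEnt_le_of_forall_closedBall (hbdd : BddAbove (Set.range h))
    {Φ Ψ : Ω → EuclideanSpace ℝ (Fin m)} (hΦ : ∀ μ : ProbabilityMeasure Ω, Integrable Φ μ)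
    (hΨ : ∀ μ : ProbabilityMeasure Ω, Integrable Ψ μ) {e : ℝ} (happrox : ∀ x, ‖Φ x - Ψ x‖ ≤ e)
    {w : EuclideanSpace ℝ (Fin m)} (hw : w ∈ Rot f Ψ) {c : ℝ}
    (hc : ∀ u ∈ closedBall w e ∩ Rot f Φ, locEnt f h Φ u ≤ c) :
    locEnt f h Ψ w ≤ c := by
  refine locEnt_le hw fun μ hμ hμw => (le_locEnt hbdd Φ hμ).trans (hc _ ⟨?_, μ, hμ, rfl⟩)
  rw [mem_closedBall, ← hμw]
  exact dist_integral_le_of_norm_sub_le (hΦ μ) (hΨ μ) happrox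

theorem exists_closedBall_subset_locEnt_superlevel (hf : Measurable f)
    (hbdd : BddAbove (Set.range h)) (haff : AffineOnMixtures h)
    {Φ : Ω → EuclideanSpace ℝ (Fin m)} (hΦ : ∀ μ : ProbabilityMeasure Ω, Integrable Φ μ)
    {w₀ : EuclideanSpace ℝ (Fin m)} (hw₀ : w₀ ∈ interior (Rot f Φ)) :
    ∃ R > 0, ∃ L : ℝ, ∀ Ψ : Ω → EuclideanSpace ℝ (Fin m),
      (∀ μ : ProbabilityMeasure Ω, Integrable Ψ μ) → ∀ e, 0 ≤ e → (∀ x, ‖Φ x - Ψ x‖ ≤ e) →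
      closedBall w₀ (R - e) ⊆ {u ∈ Rot f Ψ | L ≤ locEnt f h Ψ u} := by
  obtain ⟨r, hr, hball⟩ := nhds_basis_closedBall.mem_iff.1 (mem_interior_iff_mem_nhds.1 hw₀)
  -- finitely many invariant measures whose `Φ`-rotation vectors form an `r / 2`-net of the ball
  obtain ⟨T, hT⟩ := (isCompact_closedBall w₀ r).elim_finite_subcover
    (fun σ : {σ : ProbabilityMeasure Ω // InvariantProb f σ} =>
      ball (∫ x, Φ x ∂(σ : Measure Ω)) (r / 2))
    (fun _ => isOpen_ball) fun y hy => by
      obtain ⟨σ, hσ, rfl⟩ := hball hy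
      exact Set.mem_iUnion.2 ⟨⟨σ, hσ⟩, mem_ball_self (half_pos hr)⟩
  obtain ⟨L, hL⟩ := (T.image fun σ => h σ.1).bddBelow
  refine ⟨r / 2, half_pos hr, L, fun Ψ hΨ e he happrox => ?_⟩
  set S := (fun σ : {σ // InvariantProb f σ} => ∫ x, Ψ x ∂(σ : Measure Ω)) '' T
  have hS : convexHull ℝ S ⊆ {u ∈ Rot f Ψ | L ≤ locEnt f h Ψ u} := by
    refine convexHull_min ?_ ((concaveOn_locEnt hf hbdd haff hΨ).convex_ge L)
    rintro _ ⟨σ, hσT, rfl⟩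
    exact ⟨⟨σ, σ.2, rfl⟩, (hL (Finset.mem_image_of_mem _ hσT)).trans (le_locEnt hbdd Ψ σ.2)⟩
  have hcov : ∀ y ∈ closedBall w₀ r, ∃ p ∈ convexHull ℝ S, dist p y ≤ r / 2 + e := by
    intro y hy
    obtain ⟨σ, hσT, hyσ⟩ := Set.mem_iUnion₂.1 (hT hy)
    refine ⟨_, subset_convexHull ℝ S ⟨σ, hσT, rfl⟩, ?_⟩
    calc _ ≤ dist (∫ x, Ψ x ∂(σ : Measure Ω)) (∫ x, Φ x ∂(σ : Measure Ω))
          + dist (∫ x, Φ x ∂(σ : Measure Ω)) y := dist_triangle _ _ _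
      _ ≤ e + r / 2 := by
          rw [dist_comm, dist_comm _ y]
          exact add_le_add (dist_integral_le_of_norm_sub_le (hΦ _) (hΨ _) happrox)
            (mem_ball.1 hyσ).le
      _ = r / 2 + e := add_comm _ _
  have hhull := closedBall_sub_subset_of_forall_exists_dist_le
    ((T.finite_toSet.image _).isClosed_convexHull (𝕜 := ℝ)) (convex_convexHull ℝ S)
    (by positivity) hcov
  rw [show r - (r / 2 + e) = r / 2 - e by ring] at hhull
  exact hhull.trans hS

theorem eventually_image_locEnt_subset_Icc (hf : Measurable f) (hbdd : BddAbove (Set.range h))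
    (haff : AffineOnMixtures h) {Φ : Ω → EuclideanSpace ℝ (Fin m)}
    (hΦ : ∀ μ : ProbabilityMeasure Ω, Integrable Φ μ) {ι : Type*} {l : Filter ι}
    {Ψ : ι → Ω → EuclideanSpace ℝ (Fin m)} (hΨ : ∀ i (μ : ProbabilityMeasure Ω), Integrable (Ψ i) μ)
    {ε : ι → ℝ} (hε₀ : ∀ i, 0 ≤ ε i) (hε : Tendsto ε l (𝓝 0)) (happrox : ∀ i x, ‖Φ x - Ψ i x‖ ≤ ε i)
    {w₀ : EuclideanSpace ℝ (Fin m)} (hw₀ : w₀ ∈ interior (Rot f Φ)) (α : ℝ) {δ : ℝ} (hδ : 0 < δ) :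
    ∀ᶠ i in l, locEnt f h (Ψ i) '' (closedBall w₀ (α * ε i) ∩ Rot f (Ψ i))
      ⊆ Set.Icc (locEnt f h Φ w₀ - δ) (locEnt f h Φ w₀ + δ) := by
  set H₀ := locEnt f h Φ w₀
  have hrv i (μ : ProbabilityMeasure Ω) :
      dist (∫ x, Ψ i x ∂(μ : Measure Ω)) (∫ x, Φ x ∂(μ : Measure Ω)) ≤ ε i := by
    rw [dist_comm]; exact dist_integral_le_of_norm_sub_le (hΦ μ) (hΨ i μ) (happrox i)
  have hcont : ContinuousAt (locEnt f h Φ) w₀ :=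
    (concaveOn_locEnt hf hbdd haff hΦ).continuousOn_interior.continuousAt
      (isOpen_interior.mem_nhds hw₀)
  obtain ⟨r, hr, hupper⟩ :=
    Metric.eventually_nhds_iff.1 (hcont.eventually (gt_mem_nhds (lt_add_of_pos_right H₀ hδ)))
  obtain ⟨R, hR, L, hlow⟩ := exists_closedBall_subset_locEnt_superlevel hf hbdd haff hΦ hw₀
  obtain ⟨ν, hν, hνw₀, hνH⟩ := exists_lt_locEnt (interior_subset hw₀) (sub_lt_self H₀ (half_pos hδ))
  have hrad : Tendsto (fun i => (α + 1) * ε i) l (𝓝 0) := by simpa using hε.const_mul (α + 1)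
  filter_upwards [hrad.eventually (gt_mem_nhds hr), hrad.eventually (gt_mem_nhds (half_pos hR)),
    (hrad.mul_const |h ν - L|).eventually
      (gt_mem_nhds (by simpa using mul_pos (half_pos hR) (half_pos hδ)))] with i hr_i hR_i hδ_i
  rintro _ ⟨w, ⟨hw, hwRot⟩, rfl⟩
  rw [mem_closedBall] at hw
  constructor
  · -- compare with the `Ψ i`-rotation vector of a measure that nearly realises `H₀`
    have hdist : dist w (∫ x, Ψ i x ∂(ν : Measure Ω)) ≤ (α + 1) * ε i := by
      have := hrv i ν
      rw [hνw₀, dist_comm] at this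
      linarith [dist_triangle w w₀ (∫ x, Ψ i x ∂(ν : Measure Ω))]
    have := (concaveOn_locEnt hf hbdd haff (hΨ i)).sub_le_of_closedBall ⟨ν, hν, rfl⟩
      (le_locEnt hbdd _ hν) (half_pos hR)
      (fun u hu => hlow _ (hΨ i) _ (hε₀ i) (happrox i) (by
        rw [mem_closedBall] at hu ⊢; linarith [dist_triangle u w w₀]))
      ((mul_le_mul_of_nonneg_right hdist (abs_nonneg _)).trans hδ_i.le)
    linarith
  · refine locEnt_le_of_forall_closedBall hbdd hΦ (hΨ i) (happrox i) hwRot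
      fun u ⟨hu, _⟩ => (hupper ?_).le
    rw [mem_closedBall] at hu
    linarith [dist_triangle u w w₀]

end LocalizedEntropy

theorem stmt9_general (m : ℕ) (f : X → X) (hf : Continuous f)
    (h : ProbabilityMeasure X → ℝ)
    (hbdd : BddAbove (Set.range h))
    (haff : ∀ (μ ν ρ : ProbabilityMeasure X) (t : ℝ), 0 ≤ t → t ≤ 1 →
      (ρ : Measure X) = (ENNReal.ofReal t) • (μ : Measure X)
          + (ENNReal.ofReal (1 - t)) • (ν : Measure X) →
      h ρ = t * h μ + (1 - t) * h ν)
    (Φ : X → EuclideanSpace ℝ (Fin m)) (hΦ : Continuous Φ)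
    (ε : ℕ → ℝ) (hεpos : ∀ n, 0 < ε n) (hεto : Filter.Tendsto ε Filter.atTop (nhds 0))
    (Φseq : ℕ → X → EuclideanSpace ℝ (Fin m)) (hΦseqc : ∀ n, Continuous (Φseq n))
    (happrox : ∀ n x, ‖Φ x - Φseq n x‖ < ε n)
    (w₀ : EuclideanSpace ℝ (Fin m)) (hw₀ : w₀ ∈ interior (Rot f Φ))
    (α : ℝ) (hα : 1 ≤ α) :
    Filter.Tendsto (fun n => hl f h (Φseq n) w₀ (α * ε n)) Filter.atTop
      (nhds (locEnt f h Φ w₀)) ∧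
    Filter.Tendsto (fun n => hu f h (Φseq n) w₀ (α * ε n)) Filter.atTop
      (nhds (locEnt f h Φ w₀)) := by
  have hint {Ψ : X → EuclideanSpace ℝ (Fin m)} (hΨ : Continuous Ψ) (μ : ProbabilityMeasure X) :
      Integrable Ψ μ := hΨ.integrable_of_hasCompactSupport (.of_compactSpace _)
  have happrox' n x : ‖Φ x - Φseq n x‖ ≤ ε n := (happrox n x).le
  refine tendsto_sInf_and_sSup_of_subset_Icc (Eventually.of_forall fun n => ?_) fun δ hδ =>
    eventually_image_locEnt_subset_Icc hf.measurable hbdd haff (hint hΦ) (fun n => hint (hΦseqc n))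
      (fun n => (hεpos n).le) hεto happrox' hw₀ α hδ
  obtain ⟨μ, hμ, hμw₀⟩ := interior_subset hw₀
  refine ⟨_, _, ⟨?_, μ, hμ, rfl⟩, rfl⟩
  rw [mem_closedBall, ← hμw₀]
  exact (dist_integral_le_of_norm_sub_le (hint (hΦseqc n) μ) (hint hΦ μ)
    fun x => by rw [norm_sub_rev]; exact happrox' n x).trans
    (le_mul_of_one_le_left (hεpos n).le hα)

/-- Theorem (interior points): if the entropy map is upper semi-continuous and affine,
`w₀ ∈ int Rot(Φ)` and `α ≥ 1`, then for any approximating sequence `(Φ_{ε_n})` of `Φ`,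
`lim h^l_{Φ_{ε_n}}(w₀, α ε_n) = H_Φ(w₀) = lim h^u_{Φ_{ε_n}}(w₀, α ε_n)`. -/
theorem stmt9 (m : ℕ) (f : X → X) (hf : Continuous f)
    (h : ProbabilityMeasure X → ℝ)
    (husc : UpperSemicontinuousOn h {μ | InvariantProb f μ})
    (hbdd : BddAbove (Set.range h))
    (haff : ∀ (μ ν ρ : ProbabilityMeasure X) (t : ℝ), 0 ≤ t → t ≤ 1 →
      (ρ : Measure X) = (ENNReal.ofReal t) • (μ : Measure X)
          + (ENNReal.ofReal (1 - t)) • (ν : Measure X) →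
      h ρ = t * h μ + (1 - t) * h ν)
    (Φ : X → EuclideanSpace ℝ (Fin m)) (hΦ : Continuous Φ)
    (ε : ℕ → ℝ) (hεpos : ∀ n, 0 < ε n) (hεto : Filter.Tendsto ε Filter.atTop (nhds 0))
    (Φseq : ℕ → X → EuclideanSpace ℝ (Fin m)) (hΦseqc : ∀ n, Continuous (Φseq n))
    (happrox : ∀ n x, ‖Φ x - Φseq n x‖ < ε n)
    (w₀ : EuclideanSpace ℝ (Fin m)) (hw₀ : w₀ ∈ interior (Rot f Φ))
    (α : ℝ) (hα : 1 ≤ α) :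
    Filter.Tendsto (fun n => hl f h (Φseq n) w₀ (α * ε n)) Filter.atTop
      (nhds (locEnt f h Φ w₀)) ∧
    Filter.Tendsto (fun n => hu f h (Φseq n) w₀ (α * ε n)) Filter.atTop
      (nhds (locEnt f h Φ w₀)) :=
  stmt9_general m f hf h hbdd haff Φ hΦ ε hεpos hεto Φseq hΦseqc happrox w₀ hw₀ α hα
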